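/- Let U = B_s A_s ⋯ B_1 A_1 be a product of unitaries on a finite-dimensional Hilbert space H, and suppose ξ ∈ H is a unit vector with B_i ξ = ξ for all i = 1,…,s. Then for any α, β ∈ ℂ, applying the operator ∏_{i=s}^{1} (|0⟩⟨0| ⊗ B_i + |1⟩⟨1| ⊗ B_i A_i) (product taken with B_sA_s-factor leftmost) to (α|0⟩ + β|1⟩) ⊗ ξ yields α|0⟩ ⊗ ξ + β|1⟩ ⊗ (U ξ). In particular this equals the action of the controlled unitary |0⟩⟨0| ⊗ I + |1⟩⟨1| ⊗ U on that state. -/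

import Mathlib

open Matrix Kronecker

noncomputable section

/-- Projector `|b⟩⟨b|` on one qubit. -/
def proj (b : Fin 2) : Matrix (Fin 2) (Fin 2) ℂ :=
  fun i j => if i = b ∧ j = b then 1 else 0

/-!
The operators `|0⟩⟨0| ⊗ X + |1⟩⟨1| ⊗ Y` multiply blockwise, because `|0⟩⟨0|` and `|1⟩⟨1|` are
orthogonal idempotents summing to `1`. Hence the product of the layers is
`|0⟩⟨0| ⊗ B_s ⋯ B_1 + |1⟩⟨1| ⊗ U`, and `B_s ⋯ B_1` fixes `ξ`.
-/

theorem proj_mul_proj (a b : Fin 2) : proj a * proj b = if a = b then proj a else 0 := by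
  fin_cases a <;> fin_cases b <;> ext i j <;> fin_cases i <;> fin_cases j <;>
    simp [proj, Matrix.mul_apply]

theorem proj_zero_add_proj_one : proj 0 + proj 1 = 1 := by
  ext i j; fin_cases i <;> fin_cases j <;> simp [proj]

section BlockDiag

variable {ι : Type*} [Fintype ι] [DecidableEq ι]

def blockDiagHom : Matrix ι ι ℂ × Matrix ι ι ℂ →* Matrix (Fin 2 × ι) (Fin 2 × ι) ℂ where
  toFun XY := proj 0 ⊗ₖ XY.1 + proj 1 ⊗ₖ XY.2
  map_one' := by
    rw [Prod.fst_one, Prod.snd_one, ← add_kronecker, proj_zero_add_proj_one, one_kronecker_one]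
  map_mul' XY XY' := by
    simp only [Prod.fst_mul, Prod.snd_mul, add_mul, mul_add, ← mul_kronecker_mul, proj_mul_proj]
    simp

theorem blockDiagHom_apply (X Y : Matrix ι ι ℂ) :
    blockDiagHom (X, Y) = proj 0 ⊗ₖ X + proj 1 ⊗ₖ Y := rfl

theorem list_prod_map_blockDiagHom (L : List (Matrix ι ι ℂ × Matrix ι ι ℂ)) :
    (L.map blockDiagHom).prod = blockDiagHom ((L.map Prod.fst).prod, (L.map Prod.snd).prod) := by
  rw [← map_list_prod, ← MonoidHom.coe_fst, ← MonoidHom.coe_snd, ← map_list_prod, ← map_list_prod]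
  rfl

def blockVec (u v : ι → ℂ) : Fin 2 × ι → ℂ := fun p => ![u p.2, v p.2] p.1

theorem blockDiagHom_mulVec_blockVec (X Y : Matrix ι ι ℂ) (u v : ι → ℂ) :
    blockDiagHom (X, Y) *ᵥ blockVec u v = blockVec (X *ᵥ u) (Y *ᵥ v) := by
  ext ⟨i, a⟩
  fin_cases i <;>
    simp [blockDiagHom_apply, blockVec, mulVec, dotProduct, proj, Fintype.sum_prod_type]

end BlockDiag

theorem list_prod_mulVec_of_forall_mulVec_eq {n R : Type*} [Fintype n] [DecidableEq n]
    [Semiring R] (L : List (Matrix n n R)) (v : n → R) (h : ∀ M ∈ L, M *ᵥ v = v) :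
    L.prod *ᵥ v = v :=
  List.prod_induction (fun M => M *ᵥ v = v)
    (fun M N hM hN => by rw [← mulVec_mulVec, hN, hM]) (one_mulVec v) h

theorem stmt0 {ι : Type*} [Fintype ι] [DecidableEq ι] (s : ℕ)
    (A B : Fin s → Matrix ι ι ℂ)
    (ξ : ι → ℂ)
    (hfix : ∀ i, (B i).mulVec ξ = ξ)
    (α β : ℂ) :
    ((List.ofFn fun i : Fin s =>
        proj 0 ⊗ₖ B i + proj 1 ⊗ₖ (B i * A i)).reverse.prod).mulVec
      (fun p : Fin 2 × ι => ![α, β] p.1 * ξ p.2)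
    = (fun p : Fin 2 × ι =>
        ![α * ξ p.2,
          β * ((List.ofFn fun i : Fin s => B i * A i).reverse.prod).mulVec ξ p.2] p.1)
    ∧
    ((proj 0 ⊗ₖ (1 : Matrix ι ι ℂ) +
        proj 1 ⊗ₖ (List.ofFn fun i : Fin s => B i * A i).reverse.prod).mulVec
      (fun p : Fin 2 × ι => ![α, β] p.1 * ξ p.2))
    = (fun p : Fin 2 × ι =>
        ![α * ξ p.2,
          β * ((List.ofFn fun i : Fin s => B i * A i).reverse.prod).mulVec ξ p.2] p.1) := by
  set U := (List.ofFn fun i : Fin s => B i * A i).reverse.prod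
  have hinput : (fun p : Fin 2 × ι => ![α, β] p.1 * ξ p.2) = blockVec (α • ξ) (β • ξ) := by
    ext ⟨i, a⟩; fin_cases i <;> rfl
  have houtput : (fun p : Fin 2 × ι => ![α * ξ p.2, β * (U *ᵥ ξ) p.2] p.1)
      = blockVec (α • ξ) (U *ᵥ (β • ξ)) := by
    rw [mulVec_smul]; rfl
  have hlayers : (List.ofFn fun i => proj 0 ⊗ₖ B i + proj 1 ⊗ₖ (B i * A i)).reverse.prod
      = blockDiagHom ((List.ofFn B).reverse.prod, U) := by
    simpa [List.map_reverse, List.map_ofFn, Function.comp_def, blockDiagHom_apply] using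
      list_prod_map_blockDiagHom (List.ofFn fun i => (B i, B i * A i)).reverse
  have hξfix : (List.ofFn B).reverse.prod *ᵥ (α • ξ) = α • ξ := by
    rw [mulVec_smul, list_prod_mulVec_of_forall_mulVec_eq _ ξ (by simpa using hfix)]
  rw [hinput, houtput, hlayers, ← blockDiagHom_apply 1 U, blockDiagHom_mulVec_blockVec,
    blockDiagHom_mulVec_blockVec, hξfix, one_mulVec]
  exact ⟨rfl, rfl⟩
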